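/- arXiv:2502.06277 — 3 statements merged into one kernel-verified Lean document; each statement's English description precedes it below -/
import Mathlib

section
/- Let G₁ and G₂ be finite simple graphs of orders n₁, n₂ and sizes m₁, m₂, with maximum degrees Δ₁, Δ₂. Then the elliptic Sombor index of the join satisfies ESO(G₁+G₂) ≤ 2√2·m₁·(Δ₁+n₂)² + 2√2·m₂·(Δ₂+n₁)² + n₁n₂·(Δ₁+n₂+Δ₂+n₁)·√((Δ₁+n₂)² + (Δ₂+n₁)²). -/
/-! In the join a vertex of `G₁` has degree `d_{G₁}(v) + n₂ ≤ Δ₁ + n₂` and a vertex of `G₂` has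
degree at most `Δ₂ + n₁`. The edges of the join are the `m₁` edges of `G₁`, the `m₂` edges of `G₂`
and the `n₁ n₂` edges between the two sides, and the summand `(x + y) √(x² + y²)` is monotone in
`x, y ≥ 0`, so each edge's contribution is bounded by the value at the degree bounds of its
endpoints. -/

open Finset SimpleGraph
open scoped Classical

noncomputable def ESO {V : Type*} [Fintype V] (G : SimpleGraph V) : Real :=
  Finset.sum G.edgeSet.toFinset fun e =>
    Sym2.lift ⟨fun u v => ((G.degree u : Real) + (G.degree v : Real)) *
        Real.sqrt ((G.degree u : Real) ^ 2 + (G.degree v : Real) ^ 2),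
      fun u v => by
        dsimp only; rw [add_comm (G.degree u : Real), add_comm ((G.degree u : Real) ^ 2)]⟩ e

noncomputable def EU {V : Type*} [Fintype V] (G : SimpleGraph V) : Real :=
  Finset.sum G.edgeSet.toFinset fun e =>
    Sym2.lift ⟨fun u v => Real.sqrt ((G.degree u : Real) ^ 2 + (G.degree v : Real) ^ 2 +
        (G.degree u : Real) * (G.degree v : Real)),
      fun u v => by
        dsimp only; rw [mul_comm (G.degree u : Real), add_comm ((G.degree u : Real) ^ 2)]⟩ e

noncomputable def edgeCount {V : Type*} [Fintype V] (G : SimpleGraph V) : Nat :=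
  G.edgeSet.toFinset.card

def graphJoin {V1 V2 : Type*} (G1 : SimpleGraph V1) (G2 : SimpleGraph V2) :
    SimpleGraph (V1 ⊕ V2) where
  Adj x y :=
    match x, y with
    | Sum.inl a, Sum.inl b => G1.Adj a b
    | Sum.inr a, Sum.inr b => G2.Adj a b
    | Sum.inl _, Sum.inr _ => True
    | Sum.inr _, Sum.inl _ => True
  symm := by
    constructor
    rintro (a | a) (b | b) h
    · exact G1.adj_symm h
    · trivial
    · trivial
    · exact G2.adj_symm h
  loopless := by
    constructor
    rintro (a | a) h
    · exact G1.irrefl h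
    · exact G2.irrefl h


open Real

lemma add_mul_sqrt_sq_add_sq_le {x y a b : ℝ} (hx : 0 ≤ x) (hy : 0 ≤ y) (hxa : x ≤ a)
    (hyb : y ≤ b) : (x + y) * √(x ^ 2 + y ^ 2) ≤ (a + b) * √(a ^ 2 + b ^ 2) := by
  gcongr <;> linarith

lemma add_self_mul_sqrt_sq_add_sq_self {a : ℝ} (ha : 0 ≤ a) :
    (a + a) * √(a ^ 2 + a ^ 2) = 2 * √2 * a ^ 2 := by
  rw [← two_mul, ← two_mul, sqrt_mul zero_le_two, sqrt_sq ha]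
  ring

namespace Finset

lemma sum_union_le_of_nonneg {ι M : Type*} [DecidableEq ι] [AddCommMonoid M] [PartialOrder M]
    [IsOrderedAddMonoid M] {f : ι → M} (hf : ∀ i, 0 ≤ f i) (s t : Finset ι) :
    ∑ i ∈ s ∪ t, f i ≤ ∑ i ∈ s, f i + ∑ i ∈ t, f i := by
  rw [← sum_union_inter]
  exact le_add_of_nonneg_right (sum_nonneg fun i _ => hf i)

end Finset

namespace SimpleGraph

variable {V M : Type*} [AddCommMonoid M] [PartialOrder M] [IsOrderedAddMonoid M]

lemma sum_edgeFinset_le_of_le_sup {G H₁ H₂ : SimpleGraph V} [Fintype G.edgeSet]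
    [Fintype H₁.edgeSet] [Fintype H₂.edgeSet] (hG : G ≤ H₁ ⊔ H₂) {f : Sym2 V → M}
    (hf : ∀ e, 0 ≤ f e) :
    ∑ e ∈ G.edgeFinset, f e ≤ ∑ e ∈ H₁.edgeFinset, f e + ∑ e ∈ H₂.edgeFinset, f e := by
  have hsub : G.edgeFinset ⊆ H₁.edgeFinset ∪ H₂.edgeFinset := by
    simpa using edgeFinset_mono hG
  exact (Finset.sum_le_sum_of_subset_of_nonneg hsub fun e _ _ => hf e).trans
    (Finset.sum_union_le_of_nonneg hf _ _)

lemma sum_edgeFinset_le_card_nsmul (G : SimpleGraph V) [Fintype G.edgeSet] {f : Sym2 V → M}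
    {c : M} (h : ∀ u v, G.Adj u v → f s(u, v) ≤ c) : ∑ e ∈ G.edgeFinset, f e ≤ #G.edgeFinset • c :=
  Finset.sum_le_card_nsmul _ _ _ fun e he => by
    induction e with
    | _ u v => exact h u v (by simpa using he)

lemma card_edgeFinset_completeBipartiteGraph (W₁ W₂ : Type*) [Fintype W₁] [Fintype W₂] :
    #(completeBipartiteGraph W₁ W₂).edgeFinset = Fintype.card W₁ * Fintype.card W₂ := by
  have h := encard_edgeSet_completeBipartiteGraph (W₁ := W₁) (W₂ := W₂)
  rw [← coe_edgeFinset, Set.encard_coe_eq_coe_finsetCard, ENat.card_eq_coe_fintype_card,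
    ENat.card_eq_coe_fintype_card] at h
  exact_mod_cast h

end SimpleGraph

section graphJoin

variable {V1 V2 : Type*} (G1 : SimpleGraph V1) (G2 : SimpleGraph V2)

lemma graphJoin_eq_sup :
    graphJoin G1 G2 = G1.map Function.Embedding.inl ⊔ G2.map Function.Embedding.inr ⊔
      completeBipartiteGraph V1 V2 := by
  ext (a | a) (b | b) <;> simp [graphJoin]

variable [Fintype V1] [Fintype V2]

lemma degree_graphJoin_inl (a : V1) :
    (graphJoin G1 G2).degree (.inl a) = G1.degree a + Fintype.card V2 := by
  have h : (graphJoin G1 G2).neighborFinset (.inl a) = (G1.neighborFinset a).disjSum univ := by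
    ext (b | b) <;> simp only [mem_neighborFinset] <;> simp [graphJoin]
  rw [← card_neighborFinset_eq_degree, h, card_disjSum, card_neighborFinset_eq_degree, card_univ]

lemma degree_graphJoin_inr (b : V2) :
    (graphJoin G1 G2).degree (.inr b) = G2.degree b + Fintype.card V1 := by
  have h : (graphJoin G1 G2).neighborFinset (.inr b) = univ.disjSum (G2.neighborFinset b) := by
    ext (a | a) <;> simp only [mem_neighborFinset] <;> simp [graphJoin]
  rw [← card_neighborFinset_eq_degree, h, card_disjSum, card_neighborFinset_eq_degree, card_univ,
    add_comm]

lemma degree_graphJoin_inl_le (a : V1) :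
    (graphJoin G1 G2).degree (.inl a) ≤ G1.maxDegree + Fintype.card V2 := by
  rw [degree_graphJoin_inl]
  exact Nat.add_le_add_right (G1.degree_le_maxDegree a) _

lemma degree_graphJoin_inr_le (b : V2) :
    (graphJoin G1 G2).degree (.inr b) ≤ G2.maxDegree + Fintype.card V1 := by
  rw [degree_graphJoin_inr]
  exact Nat.add_le_add_right (G2.degree_le_maxDegree b) _

end graphJoin

theorem eso_join_upper {V1 V2 : Type*} [Fintype V1] [Fintype V2]
    (G1 : SimpleGraph V1) (G2 : SimpleGraph V2) :
    ESO (graphJoin G1 G2) ≤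
      2 * Real.sqrt 2 * (edgeCount G1 : Real) * ((G1.maxDegree : Real) + Fintype.card V2) ^ 2 +
      2 * Real.sqrt 2 * (edgeCount G2 : Real) * ((G2.maxDegree : Real) + Fintype.card V1) ^ 2 +
      (Fintype.card V1 : Real) * (Fintype.card V2 : Real) *
        ((G1.maxDegree : Real) + Fintype.card V2 + (G2.maxDegree : Real) + Fintype.card V1) *
        Real.sqrt (((G1.maxDegree : Real) + Fintype.card V2) ^ 2 +
          ((G2.maxDegree : Real) + Fintype.card V1) ^ 2) := by
  have hA_inl (a : V1) :
      ((graphJoin G1 G2).degree (.inl a) : ℝ) ≤ G1.maxDegree + Fintype.card V2 := by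
    exact_mod_cast degree_graphJoin_inl_le G1 G2 a
  have hB_inr (b : V2) :
      ((graphJoin G1 G2).degree (.inr b) : ℝ) ≤ G2.maxDegree + Fintype.card V1 := by
    exact_mod_cast degree_graphJoin_inr_le G1 G2 b
  set J := graphJoin G1 G2
  set A : ℝ := G1.maxDegree + Fintype.card V2
  set B : ℝ := G2.maxDegree + Fintype.card V1 with hB
  have hterm (u v : V1 ⊕ V2) {x y : ℝ} (hx : (J.degree u : ℝ) ≤ x) (hy : (J.degree v : ℝ) ≤ y) :
      ((J.degree u : ℝ) + J.degree v) * √((J.degree u : ℝ) ^ 2 + (J.degree v : ℝ) ^ 2) ≤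
        (x + y) * √(x ^ 2 + y ^ 2) :=
    add_mul_sqrt_sq_add_sq_le (by positivity) (by positivity) hx hy
  unfold ESO
  refine ((sum_edgeFinset_le_of_le_sup (graphJoin_eq_sup G1 G2).le ?nonneg).trans
    (add_le_add_left (sum_edgeFinset_le_of_le_sup le_rfl ?nonneg) _)).trans ?_
  case nonneg => exact Sym2.ind fun u v => by rw [Sym2.lift_mk]; positivity
  calc _ ≤ #(G1.map Function.Embedding.inl).edgeFinset • (2 * √2 * A ^ 2) +
        #(G2.map Function.Embedding.inr).edgeFinset • (2 * √2 * B ^ 2) +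
        #(completeBipartiteGraph V1 V2).edgeFinset • ((A + B) * √(A ^ 2 + B ^ 2)) := by
        gcongr <;> refine sum_edgeFinset_le_card_nsmul _ ?_
        · rintro _ _ ⟨-, a, b, -, rfl, rfl⟩
          exact (hterm _ _ (hA_inl a) (hA_inl b)).trans_eq
            (add_self_mul_sqrt_sq_add_sq_self (by positivity))
        · rintro _ _ ⟨-, a, b, -, rfl, rfl⟩
          exact (hterm _ _ (hB_inr a) (hB_inr b)).trans_eq
            (add_self_mul_sqrt_sq_add_sq_self (by positivity))
        · rintro (a | a) (b | b) h <;> simp at h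
          · exact hterm _ _ (hA_inl a) (hB_inr b)
          · rw [Sym2.eq_swap]
            exact hterm _ _ (hA_inl b) (hB_inr a)
    _ = _ := by
      rw [card_edgeFinset_map, card_edgeFinset_map, card_edgeFinset_completeBipartiteGraph]
      simp only [nsmul_eq_mul, edgeCount, edgeFinset, Nat.cast_mul, hB]
      ring
end

section
/- Let G₁ and G₂ be finite simple graphs of orders n₁, n₂ and sizes m₁, m₂ with maximum degrees Δ₁, Δ₂. Then the elliptic Sombor index of the corona product satisfies ESO(G₁ ∘ G₂) ≤ 2√2·m₁·(Δ₁+n₂)² + 2√2·n₁·m₂·(Δ₂+1)² + n₁n₂·(Δ₁+n₂+Δ₂+1)·√((Δ₁+n₂)² + (Δ₂+1)²). -/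
open Finset SimpleGraph
open scoped Classical

def corona {V1 V2 : Type*} (G1 : SimpleGraph V1) (G2 : SimpleGraph V2) :
    SimpleGraph (V1 ⊕ V1 × V2) where
  Adj x y :=
    match x, y with
    | Sum.inl a, Sum.inl b => G1.Adj a b
    | Sum.inr p, Sum.inr q => p.1 = q.1 ∧ G2.Adj p.2 q.2
    | Sum.inl a, Sum.inr p => a = p.1
    | Sum.inr p, Sum.inl a => a = p.1
  symm := by
    constructor
    rintro (a | p) (b | q) h
    · exact G1.adj_symm h
    · exact h
    · exact h
    · exact ⟨h.1.symm, G2.adj_symm h.2⟩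
  loopless := by
    constructor
    rintro (a | p) h
    · exact G1.irrefl h
    · exact G2.irrefl h.2

/-!
In the corona product a vertex of `G₁` has degree at most `Δ₁ + n₂` and a vertex of a copy of
`G₂` has degree at most `Δ₂ + 1`. Every edge lies in `G₁`, in one of the `n₁` copies of `G₂`, or
is one of the `n₁ n₂` spokes joining a vertex of `G₁` to its copy, and the summand
`(x + y) √(x² + y²)` is monotone in both degrees, so each edge contributes at most the value at the
corresponding pair of degree bounds.
-/

noncomputable def esoTerm (x y : ℝ) : ℝ := (x + y) * √(x ^ 2 + y ^ 2)

lemma esoTerm_comm (x y : ℝ) : esoTerm x y = esoTerm y x := by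
  rw [esoTerm, esoTerm, add_comm x, add_comm (x ^ 2)]

lemma esoTerm_nonneg {x y : ℝ} (hx : 0 ≤ x) (hy : 0 ≤ y) : 0 ≤ esoTerm x y := by
  unfold esoTerm; positivity

lemma esoTerm_le_esoTerm {x y X Y : ℝ} (hx : 0 ≤ x) (hy : 0 ≤ y) (hX : x ≤ X) (hY : y ≤ Y) :
    esoTerm x y ≤ esoTerm X Y := by
  unfold esoTerm; gcongr; linarith

lemma esoTerm_self {a : ℝ} (ha : 0 ≤ a) : esoTerm a a = 2 * √2 * a ^ 2 := by
  rw [esoTerm, ← two_mul (a ^ 2), Real.sqrt_mul zero_le_two, Real.sqrt_sq ha]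
  ring

section EdgeWeight

variable {V : Type*} [Fintype V] (G : SimpleGraph V)

noncomputable def esoWeight : Sym2 V → ℝ :=
  Sym2.lift ⟨fun u v => esoTerm (G.degree u) (G.degree v), fun _ _ => esoTerm_comm _ _⟩

lemma esoWeight_nonneg (e : Sym2 V) : 0 ≤ esoWeight G e :=
  e.ind fun _ _ => esoTerm_nonneg (Nat.cast_nonneg _) (Nat.cast_nonneg _)

lemma esoWeight_mk_le {u v : V} {X Y : ℝ} (hu : (G.degree u : ℝ) ≤ X)
    (hv : (G.degree v : ℝ) ≤ Y) : esoWeight G s(u, v) ≤ esoTerm X Y :=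
  esoTerm_le_esoTerm (Nat.cast_nonneg _) (Nat.cast_nonneg _) hu hv

lemma ESO_le_sum_of_edgeSet_subset_image [DecidableEq V] {ι : Type*} (s : Finset ι)
    (f : ι → Sym2 V) (h : G.edgeSet.toFinset ⊆ s.image f) :
    ESO G ≤ ∑ i ∈ s, esoWeight G (f i) :=
  calc ESO G = ∑ e ∈ G.edgeSet.toFinset, esoWeight G e := rfl
    _ ≤ ∑ e ∈ s.image f, esoWeight G e :=
      sum_le_sum_of_subset_of_nonneg h fun e _ _ => esoWeight_nonneg G e
    _ ≤ ∑ i ∈ s, esoWeight G (f i) :=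
      sum_image_le_of_nonneg fun e _ => esoWeight_nonneg G e

end EdgeWeight

section Corona

variable {V1 V2 : Type*}

def coronaEdge : Sym2 V1 ⊕ (V1 × Sym2 V2) ⊕ (V1 × V2) → Sym2 (V1 ⊕ V1 × V2)
  | .inl e => e.map .inl
  | .inr (.inl (a, e)) => e.map fun v => .inr (a, v)
  | .inr (.inr p) => s(.inl p.1, .inr p)

variable (G1 : SimpleGraph V1) (G2 : SimpleGraph V2)

@[simp] lemma corona_adj_inl_inl {a b : V1} : (corona G1 G2).Adj (.inl a) (.inl b) ↔ G1.Adj a b :=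
  Iff.rfl

@[simp] lemma corona_adj_inr_inr {p q : V1 × V2} :
    (corona G1 G2).Adj (.inr p) (.inr q) ↔ p.1 = q.1 ∧ G2.Adj p.2 q.2 :=
  Iff.rfl

variable [Fintype V1] [Fintype V2]

lemma edgeSet_corona_subset_image :
    (corona G1 G2).edgeSet.toFinset ⊆
      (G1.edgeSet.toFinset.disjSum ((univ ×ˢ G2.edgeSet.toFinset).disjSum univ)).image
        coronaEdge := by
  intro e he
  induction e using Sym2.ind with | _ x y => ?_
  rw [Set.mem_toFinset, mem_edgeSet] at he
  rw [mem_image]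
  rcases x with a | ⟨a, v⟩ <;> rcases y with b | ⟨b, w⟩
  · exact ⟨.inl s(a, b), by simpa using he, rfl⟩
  · exact ⟨.inr (.inr (b, w)), by simp, by simp [coronaEdge, show a = b from he]⟩
  · exact ⟨.inr (.inr (a, v)), by simp, by simp [coronaEdge, show b = a from he, Sym2.eq_swap]⟩
  · obtain ⟨rfl, hvw⟩ : a = b ∧ G2.Adj v w := he
    exact ⟨.inr (.inl (a, s(v, w))), by simpa using hvw, rfl⟩

lemma degree_corona_inl_le (a : V1) :
    (corona G1 G2).degree (.inl a) ≤ G1.maxDegree + Fintype.card V2 := by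
  have hsub : (corona G1 G2).neighborFinset (.inl a) ⊆
      (G1.neighborFinset a).disjSum ({a} ×ˢ univ) := by
    rintro (b | ⟨b, v⟩) h <;> aesop
  calc (corona G1 G2).degree (.inl a)
      ≤ ((G1.neighborFinset a).disjSum ({a} ×ˢ (univ : Finset V2))).card := card_le_card hsub
    _ = G1.degree a + Fintype.card V2 := by simp
    _ ≤ G1.maxDegree + Fintype.card V2 := by gcongr; exact G1.degree_le_maxDegree a

lemma degree_corona_inr_le (p : V1 × V2) :
    (corona G1 G2).degree (.inr p) ≤ G2.maxDegree + 1 := by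
  have hsub : (corona G1 G2).neighborFinset (.inr p) ⊆
      ({p.1} : Finset V1).disjSum ({p.1} ×ˢ G2.neighborFinset p.2) := by
    rintro (b | ⟨b, v⟩) h <;> aesop
  calc (corona G1 G2).degree (.inr p)
      ≤ (({p.1} : Finset V1).disjSum ({p.1} ×ˢ G2.neighborFinset p.2)).card := card_le_card hsub
    _ = G2.degree p.2 + 1 := by simp [add_comm]
    _ ≤ G2.maxDegree + 1 := by gcongr; exact G2.degree_le_maxDegree p.2

lemma esoWeight_coronaEdge_le (x : Sym2 V1 ⊕ (V1 × Sym2 V2) ⊕ (V1 × V2)) :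
    esoWeight (corona G1 G2) (coronaEdge x) ≤
      let A : ℝ := G1.maxDegree + Fintype.card V2
      let B : ℝ := G2.maxDegree + 1
      Sum.elim (fun _ => esoTerm A A) (Sum.elim (fun _ => esoTerm B B) fun _ => esoTerm A B) x := by
  have hA (a : V1) : ((corona G1 G2).degree (.inl a) : ℝ) ≤ G1.maxDegree + Fintype.card V2 := by
    exact_mod_cast degree_corona_inl_le G1 G2 a
  have hB (p : V1 × V2) : ((corona G1 G2).degree (.inr p) : ℝ) ≤ G2.maxDegree + 1 := by
    exact_mod_cast degree_corona_inr_le G1 G2 p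
  rcases x with e | ⟨a, e⟩ | p
  · induction e using Sym2.ind with | _ a b => exact esoWeight_mk_le _ (hA a) (hA b)
  · induction e using Sym2.ind with | _ v w => exact esoWeight_mk_le _ (hB _) (hB _)
  · exact esoWeight_mk_le _ (hA _) (hB _)

end Corona

theorem eso_corona_upper {V1 V2 : Type*} [Fintype V1] [Fintype V2]
    (G1 : SimpleGraph V1) (G2 : SimpleGraph V2) :
    ESO (corona G1 G2) ≤
      2 * Real.sqrt 2 * (edgeCount G1 : Real) * ((G1.maxDegree : Real) + Fintype.card V2) ^ 2 +
      2 * Real.sqrt 2 * (Fintype.card V1 : Real) * (edgeCount G2 : Real) *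
        ((G2.maxDegree : Real) + 1) ^ 2 +
      (Fintype.card V1 : Real) * (Fintype.card V2 : Real) *
        ((G1.maxDegree : Real) + Fintype.card V2 + (G2.maxDegree : Real) + 1) *
        Real.sqrt (((G1.maxDegree : Real) + Fintype.card V2) ^ 2 +
          ((G2.maxDegree : Real) + 1) ^ 2) := by
  calc ESO (corona G1 G2)
      ≤ ∑ x ∈ G1.edgeSet.toFinset.disjSum ((univ ×ˢ G2.edgeSet.toFinset).disjSum univ),
          esoWeight (corona G1 G2) (coronaEdge x) :=
        ESO_le_sum_of_edgeSet_subset_image _ _ _ (edgeSet_corona_subset_image G1 G2)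
    _ ≤ _ := sum_le_sum fun x _ => esoWeight_coronaEdge_le G1 G2 x
    _ = _ := by
      simp only [sum_disjSum, Sum.elim_inl, Sum.elim_inr, sum_const, card_product, card_univ,
        Fintype.card_prod, nsmul_eq_mul, Nat.cast_mul,
        esoTerm_self (by positivity : (0 : ℝ) ≤ G1.maxDegree + Fintype.card V2),
        esoTerm_self (by positivity : (0 : ℝ) ≤ G2.maxDegree + 1)]
      rw [esoTerm, edgeCount, edgeCount]
      ring
end

section
/- If G₁ is r₁-regular with n₁ vertices and m₁ edges and G₂ is r₂-regular with n₂ vertices and m₂ edges, then EU(G₁ ∘ G₂) = √3·m₁·(r₁+n₂) + √3·n₁·m₂·(r₂+1) + n₁n₂·√((r₁+n₂)² + (r₂+1)² + (r₁+n₂)(r₂+1)). -/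
open Finset SimpleGraph
open scoped Classical

/-! Summing the weight `√(x² + y² + xy)` of an edge over ordered adjacent pairs counts every
edge twice. In `G₁ ∘ G₂` each vertex of `G₁` has degree `r₁ + n₂` and each vertex of a copy of
`G₂` has degree `r₂ + 1`, so the neighbour sum at every vertex is explicit; the handshake
identities `2 mᵢ = nᵢ rᵢ` turn the total back into the stated edge counts. -/

namespace SimpleGraph

section DartSums

variable {V : Type*} [Fintype V] (G : SimpleGraph V) [DecidableRel G.Adj]
  {M : Type*} [AddCommMonoid M]

theorem sum_darts_edge (f : Sym2 V → M) :
    ∑ d : G.Dart, f d.edge = 2 • ∑ e ∈ G.edgeFinset, f e := by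
  rw [← Finset.sum_fiberwise_of_maps_to (g := Dart.edge) (t := G.edgeFinset) (by simp),
    Finset.smul_sum]
  refine Finset.sum_congr rfl fun e he => ?_
  rw [Finset.sum_congr rfl fun d hd => congrArg f (Finset.mem_filter.1 hd).2, Finset.sum_const,
    G.dart_edge_fiber_card e (mem_edgeFinset.1 he)]

theorem sum_darts_eq_sum_sum_neighborFinset (g : V → V → M) :
    ∑ d : G.Dart, g d.fst d.snd = ∑ v, ∑ w ∈ G.neighborFinset v, g v w := by
  let e : (Σ v, G.neighborSet v) ≃ G.Dart :=
    { toFun := fun s => ⟨(s.1, s.2), s.2.2⟩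
      invFun := fun d => ⟨d.fst, d.snd, d.adj⟩ }
  rw [← Fintype.sum_equiv e (fun s => g s.1 s.2) _ fun _ => rfl, Fintype.sum_sigma]
  exact Finset.sum_congr rfl fun v _ => Finset.sum_set_coe (f := g v) _

theorem sum_sum_neighborFinset_eq_two_nsmul_sum_edgeFinset (f : Sym2 V → M) :
    ∑ v, ∑ w ∈ G.neighborFinset v, f s(v, w) = 2 • ∑ e ∈ G.edgeFinset, f e := by
  rw [← sum_darts_eq_sum_sum_neighborFinset, ← sum_darts_edge]
  rfl

theorem IsRegularOfDegree.two_mul_card_edgeFinset {d : ℕ} (h : G.IsRegularOfDegree d) :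
    2 * #G.edgeFinset = Fintype.card V * d := by
  rw [← sum_degrees_eq_twice_card_edges, Finset.sum_congr rfl fun v _ => h.degree_eq v,
    Finset.sum_const, Finset.card_univ, smul_eq_mul]

end DartSums

end SimpleGraph

noncomputable def euWeight (x y : ℝ) : ℝ := √(x ^ 2 + y ^ 2 + x * y)

theorem euWeight_comm (x y : ℝ) : euWeight x y = euWeight y x := by
  rw [euWeight, euWeight, add_comm (x ^ 2), mul_comm]

theorem euWeight_self {x : ℝ} (hx : 0 ≤ x) : euWeight x x = √3 * x := by
  rw [euWeight, show x ^ 2 + x ^ 2 + x * x = 3 * x ^ 2 by ring, Real.sqrt_mul zero_le_three,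
    Real.sqrt_sq hx]

theorem two_mul_EU {V : Type*} [Fintype V] (G : SimpleGraph V) :
    2 * EU G = ∑ v, ∑ w ∈ G.neighborFinset v, euWeight (G.degree v) (G.degree w) := by
  rw [EU, two_mul, ← two_nsmul]
  exact (G.sum_sum_neighborFinset_eq_two_nsmul_sum_edgeFinset _).symm

theorem SimpleGraph.IsRegularOfDegree.two_mul_edgeCount {V : Type*} [Fintype V]
    {G : SimpleGraph V} {d : ℕ} (h : G.IsRegularOfDegree d) :
    2 * edgeCount G = Fintype.card V * d :=
  h.two_mul_card_edgeFinset

section Corona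

variable {V1 V2 : Type*} [Fintype V1] [Fintype V2] (G1 : SimpleGraph V1) (G2 : SimpleGraph V2)

theorem corona_neighborFinset_inl (a : V1) :
    (corona G1 G2).neighborFinset (.inl a) =
      (G1.neighborFinset a).disjSum (univ.map ⟨(a, ·), Prod.mk_right_injective a⟩) := by
  ext (b | ⟨c, v⟩) <;> rw [mem_neighborFinset] <;> simp [corona, eq_comm]

theorem corona_neighborFinset_inr (p : V1 × V2) :
    (corona G1 G2).neighborFinset (.inr p) =
      ({p.1} : Finset V1).disjSum
        ((G2.neighborFinset p.2).map ⟨(p.1, ·), Prod.mk_right_injective p.1⟩) := by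
  obtain ⟨a, u⟩ := p
  ext (b | ⟨c, v⟩) <;> rw [mem_neighborFinset] <;> simp [corona, eq_comm, and_comm]

theorem corona_degree_inl (a : V1) :
    (corona G1 G2).degree (.inl a) = G1.degree a + Fintype.card V2 := by
  rw [← card_neighborFinset_eq_degree, corona_neighborFinset_inl, card_disjSum, card_map,
    card_univ, card_neighborFinset_eq_degree]

theorem corona_degree_inr (p : V1 × V2) :
    (corona G1 G2).degree (.inr p) = G2.degree p.2 + 1 := by
  rw [← card_neighborFinset_eq_degree, corona_neighborFinset_inr, card_disjSum, card_map,
    card_singleton, card_neighborFinset_eq_degree, add_comm]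

end Corona

theorem eu_corona_regular {V1 V2 : Type*} [Fintype V1] [Fintype V2]
    (G1 : SimpleGraph V1) (G2 : SimpleGraph V2) (r1 r2 : Nat)
    (h1 : G1.IsRegularOfDegree r1) (h2 : G2.IsRegularOfDegree r2) :
    EU (corona G1 G2) =
      Real.sqrt 3 * (edgeCount G1 : Real) * ((r1 : Real) + Fintype.card V2) +
      Real.sqrt 3 * (Fintype.card V1 : Real) * (edgeCount G2 : Real) * ((r2 : Real) + 1) +
      (Fintype.card V1 : Real) * (Fintype.card V2 : Real) *
        Real.sqrt (((r1 : Real) + Fintype.card V2) ^ 2 + ((r2 : Real) + 1) ^ 2 +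
          ((r1 : Real) + Fintype.card V2) * ((r2 : Real) + 1)) := by
  set D1 : ℝ := r1 + Fintype.card V2
  set D2 : ℝ := r2 + 1
  have hdeg_inl (a : V1) : ((corona G1 G2).degree (.inl a) : ℝ) = D1 := by
    simp [D1, corona_degree_inl, h1.degree_eq]
  have hdeg_inr (p : V1 × V2) : ((corona G1 G2).degree (.inr p) : ℝ) = D2 := by
    simp [D2, corona_degree_inr, h2.degree_eq]
  have hsum_inl (a : V1) : ∑ w ∈ (corona G1 G2).neighborFinset (.inl a),
      euWeight ((corona G1 G2).degree (.inl a)) ((corona G1 G2).degree w) =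
        r1 * (√3 * D1) + Fintype.card V2 * euWeight D1 D2 := by
    simp only [corona_neighborFinset_inl, sum_disjSum, hdeg_inl, hdeg_inr, sum_const, card_map,
      card_univ, card_neighborFinset_eq_degree, h1.degree_eq, nsmul_eq_mul,
      euWeight_self (by positivity : 0 ≤ D1)]
  have hsum_inr (p : V1 × V2) : ∑ w ∈ (corona G1 G2).neighborFinset (.inr p),
      euWeight ((corona G1 G2).degree (.inr p)) ((corona G1 G2).degree w) =
        euWeight D1 D2 + r2 * (√3 * D2) := by
    simp only [corona_neighborFinset_inr, sum_disjSum, hdeg_inl, hdeg_inr, sum_const, card_map,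
      card_singleton, card_neighborFinset_eq_degree, h2.degree_eq, one_smul, nsmul_eq_mul,
      euWeight_self (by positivity : 0 ≤ D2), euWeight_comm D2 D1]
  have hEU := two_mul_EU (corona G1 G2)
  rw [Fintype.sum_sum_type, sum_congr rfl fun a _ => hsum_inl a,
    sum_congr rfl fun p _ => hsum_inr p] at hEU
  simp only [sum_const, card_univ, Fintype.card_prod, nsmul_eq_mul, Nat.cast_mul, euWeight] at hEU
  have hm1 : 2 * (edgeCount G1 : ℝ) = Fintype.card V1 * r1 := by
    exact_mod_cast h1.two_mul_edgeCount
  have hm2 : 2 * (edgeCount G2 : ℝ) = Fintype.card V2 * r2 := by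
    exact_mod_cast h2.two_mul_edgeCount
  linear_combination (1 / 2 : ℝ) * hEU - (√3 * D1 / 2) * hm1 -
    (√3 * Fintype.card V1 * D2 / 2) * hm2
end
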